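/- (Flat-space version of Theorem 1.) Let H, σ : ℝ³ → M₃(ℝ) be smooth symmetric trace-free matrix fields and ω, a : ℝ³ → ℝ³ smooth vector fields satisfying pointwise the purely magnetic equations [σ,H] = 3Hω, div H = 0, curl H = −2 a∧H, and H = curl σ + (Dω)^ + 2 a⊗̂ω. Then at every point x with H(x) ≠ 0 one has ⟨H, curl σ⟩(x) > 0 and ⟨H, Dω + 2 a⊗ω⟩(x) > 0. In particular, such a system with H nowhere zero cannot exist if ⟨H, curl σ⟩ ≤ 0 somewhere or ⟨H, Dω + 2 a⊗ω⟩ ≤ 0 somewhere. -/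

import Mathlib

open Matrix BigOperators
open scoped RealInnerProductSpace

noncomputable section

/-- Vectors in ℝ³. -/
abbrev V3 := Fin 3 → ℝ

/-- 3×3 real matrices. -/
abbrev M3 := Matrix (Fin 3) (Fin 3) ℝ

/-- The Levi-Civita symbol on three indices. -/
def eps (a b c : Fin 3) : ℝ :=
  if (a, b, c) = (0, 1, 2) ∨ (a, b, c) = (1, 2, 0) ∨ (a, b, c) = (2, 0, 1) then 1
  else if (a, b, c) = (0, 2, 1) ∨ (a, b, c) = (2, 1, 0) ∨ (a, b, c) = (1, 0, 2) then -1
  else 0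

/-- The Frobenius inner product ⟨A,B⟩ = Σ_{i,j} A_{ij} B_{ij}. -/
def frob (A B : M3) : ℝ := ∑ i, ∑ j, A i j * B i j

/-- The Euclidean inner product on ℝ³. -/
def dot3 (v w : V3) : ℝ := ∑ a, v a * w a

/-- The generalized vector product of two 3×3 matrices:
    [A,B]_a = Σ_{b,c} ε_{abc} (AB)_{bc}. -/
def mcross (A B : M3) : V3 := fun a => ∑ b, ∑ c, eps a b c * (A * B) b c

/-- v ∧ B : (v∧B)_{ab} = ½ Σ_{c,d} (ε_{acd} v_c B_{db} + ε_{bcd} v_c B_{da}). -/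
def vwedge (v : V3) (B : M3) : M3 := fun a b =>
  (1 / 2 : ℝ) * ∑ c, ∑ d, (eps a c d * v c * B d b + eps b c d * v c * B d a)

/-- The tensor product (a⊗ω)_{ij} = a_i ω_j. -/
def tens (a ω : V3) : M3 := fun i j => a i * ω j

/-- The trace-free symmetric part X^ = ½(X+Xᵀ) − (1/3)(Tr X)·I. -/
def hat (X : M3) : M3 := (1 / 2 : ℝ) • (X + Xᵀ) - ((1 / 3 : ℝ) * X.trace) • (1 : M3)

/-- The partial derivative ∂_c f at x of a scalar field f : ℝ³ → ℝ. -/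
def pd (c : Fin 3) (f : V3 → ℝ) (x : V3) : ℝ := fderiv ℝ f x (Pi.single c 1)

/-- The curl of a matrix field:
    (curl A)_{ab} = ½ Σ_{c,d} (ε_{acd} ∂_c A_{db} + ε_{bcd} ∂_c A_{da}). -/
def curlM (A : V3 → M3) (x : V3) : M3 := fun a b =>
  (1 / 2 : ℝ) * ∑ c, ∑ d,
    (eps a c d * pd c (fun y => A y d b) x + eps b c d * pd c (fun y => A y d a) x)

/-- The divergence of a vector field: div w = Σ_a ∂_a w_a. -/
def divV (w : V3 → V3) (x : V3) : ℝ := ∑ a, pd a (fun y => w y a) x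

/-- The divergence of a matrix field: (div A)_b = Σ_a ∂_a A_{ab}. -/
def divM (A : V3 → M3) (x : V3) : V3 := fun b => ∑ a, pd a (fun y => A y a b) x

/-- The Jacobian matrix field (Dw)_{ab} = ∂_a w_b. -/
def jac (w : V3 → V3) (x : V3) : M3 := fun a b => pd a (fun y => w y b) x

theorem epsv000 : eps 0 0 0 = 0 := by simp [eps, Prod.ext_iff, Fin.ext_iff]
theorem epsv001 : eps 0 0 1 = 0 := by simp [eps, Prod.ext_iff, Fin.ext_iff]
theorem epsv002 : eps 0 0 2 = 0 := by simp [eps, Prod.ext_iff, Fin.ext_iff]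
theorem epsv010 : eps 0 1 0 = 0 := by simp [eps, Prod.ext_iff, Fin.ext_iff]
theorem epsv011 : eps 0 1 1 = 0 := by simp [eps, Prod.ext_iff, Fin.ext_iff]
theorem epsv012 : eps 0 1 2 = 1 := by simp [eps, Prod.ext_iff, Fin.ext_iff]
theorem epsv020 : eps 0 2 0 = 0 := by simp [eps, Prod.ext_iff, Fin.ext_iff]
theorem epsv021 : eps 0 2 1 = (-1) := by simp [eps, Prod.ext_iff, Fin.ext_iff]
theorem epsv022 : eps 0 2 2 = 0 := by simp [eps, Prod.ext_iff, Fin.ext_iff]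
theorem epsv100 : eps 1 0 0 = 0 := by simp [eps, Prod.ext_iff, Fin.ext_iff]
theorem epsv101 : eps 1 0 1 = 0 := by simp [eps, Prod.ext_iff, Fin.ext_iff]
theorem epsv102 : eps 1 0 2 = (-1) := by simp [eps, Prod.ext_iff, Fin.ext_iff]
theorem epsv110 : eps 1 1 0 = 0 := by simp [eps, Prod.ext_iff, Fin.ext_iff]
theorem epsv111 : eps 1 1 1 = 0 := by simp [eps, Prod.ext_iff, Fin.ext_iff]
theorem epsv112 : eps 1 1 2 = 0 := by simp [eps, Prod.ext_iff, Fin.ext_iff]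
theorem epsv120 : eps 1 2 0 = 1 := by simp [eps, Prod.ext_iff, Fin.ext_iff]
theorem epsv121 : eps 1 2 1 = 0 := by simp [eps, Prod.ext_iff, Fin.ext_iff]
theorem epsv122 : eps 1 2 2 = 0 := by simp [eps, Prod.ext_iff, Fin.ext_iff]
theorem epsv200 : eps 2 0 0 = 0 := by simp [eps, Prod.ext_iff, Fin.ext_iff]
theorem epsv201 : eps 2 0 1 = 1 := by simp [eps, Prod.ext_iff, Fin.ext_iff]
theorem epsv202 : eps 2 0 2 = 0 := by simp [eps, Prod.ext_iff, Fin.ext_iff]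
theorem epsv210 : eps 2 1 0 = (-1) := by simp [eps, Prod.ext_iff, Fin.ext_iff]
theorem epsv211 : eps 2 1 1 = 0 := by simp [eps, Prod.ext_iff, Fin.ext_iff]
theorem epsv212 : eps 2 1 2 = 0 := by simp [eps, Prod.ext_iff, Fin.ext_iff]
theorem epsv220 : eps 2 2 0 = 0 := by simp [eps, Prod.ext_iff, Fin.ext_iff]
theorem epsv221 : eps 2 2 1 = 0 := by simp [eps, Prod.ext_iff, Fin.ext_iff]
theorem epsv222 : eps 2 2 2 = 0 := by simp [eps, Prod.ext_iff, Fin.ext_iff]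

theorem pd_sum' {ι : Type} (s : Finset ι) (f : ι → V3 → ℝ) (c : Fin 3) (x : V3)
    (h : ∀ i ∈ s, DifferentiableAt ℝ (f i) x) :
    pd c (fun y => ∑ i ∈ s, f i y) x = ∑ i ∈ s, pd c (f i) x := by
  unfold pd; rw [fderiv_fun_sum h]; simp

theorem pd_mul' (f g : V3 → ℝ) (c : Fin 3) (x : V3)
    (hf : DifferentiableAt ℝ f x) (hg : DifferentiableAt ℝ g x) :
    pd c (fun y => f y * g y) x = pd c f x * g x + f x * pd c g x := by
  unfold pd; rw [fderiv_fun_mul hf hg]; simp; ring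

theorem pd_cmul' (r : ℝ) (g : V3 → ℝ) (c : Fin 3) (x : V3) (hg : DifferentiableAt ℝ g x) :
    pd c (fun y => r * g y) x = r * pd c g x := by
  unfold pd; rw [fderiv_const_mul hg]; simp

set_option maxHeartbeats 8000000 in
set_option maxRecDepth 16000 in
/-- flat-space version of Theorem 1. -/
theorem stmt_8 (H σ : V3 → M3) (ω a : V3 → V3)
    (hH : ∀ i j, ContDiff ℝ (⊤ : ℕ∞) fun x => H x i j)
    (hσ : ∀ i j, ContDiff ℝ (⊤ : ℕ∞) fun x => σ x i j)
    (hω : ∀ i, ContDiff ℝ (⊤ : ℕ∞) fun x => ω x i)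
    (ha : ∀ i, ContDiff ℝ (⊤ : ℕ∞) fun x => a x i)
    (hHsym : ∀ x, (H x)ᵀ = H x) (hHtf : ∀ x, (H x).trace = 0)
    (hσsym : ∀ x, (σ x)ᵀ = σ x) (hσtf : ∀ x, (σ x).trace = 0)
    (hbi1 : ∀ x, mcross (σ x) (H x) = (3 : ℝ) • (H x).mulVec (ω x))
    (hbi2 : ∀ x, divM H x = 0)
    (hbi3 : ∀ x, curlM H x = -(2 : ℝ) • vwedge (a x) (H x))
    (hRicci : ∀ x, H x = curlM σ x + hat (jac ω x) + (2 : ℝ) • hat (tens (a x) (ω x))) :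
    ∀ x, H x ≠ 0 →
      0 < frob (H x) (curlM σ x)
      ∧ 0 < frob (H x) (jac ω x + (2 : ℝ) • tens (a x) (ω x)) := by
  intro x hx
  -- differentiability of all the entry functions
  have dσa : ∀ (i j : Fin 3) (y : V3), DifferentiableAt ℝ (fun z => σ z i j) y :=
    fun i j y => ((hσ i j).differentiable (by simp)) y
  have dHa : ∀ (i j : Fin 3) (y : V3), DifferentiableAt ℝ (fun z => H z i j) y :=
    fun i j y => ((hH i j).differentiable (by simp)) y
  have dωa : ∀ (i : Fin 3) (y : V3), DifferentiableAt ℝ (fun z => ω z i) y :=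
    fun i y => ((hω i).differentiable (by simp)) y
  -- symmetry of entries
  have eH10 : H x 1 0 = H x 0 1 := congrFun (congrFun (hHsym x) 0) 1
  have eH20 : H x 2 0 = H x 0 2 := congrFun (congrFun (hHsym x) 0) 2
  have eH21 : H x 2 1 = H x 1 2 := congrFun (congrFun (hHsym x) 1) 2
  have eS10 : σ x 1 0 = σ x 0 1 := congrFun (congrFun (hσsym x) 0) 1
  have eS20 : σ x 2 0 = σ x 0 2 := congrFun (congrFun (hσsym x) 0) 2
  have eS21 : σ x 2 1 = σ x 1 2 := congrFun (congrFun (hσsym x) 1) 2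
  -- symmetry of derivatives of H
  have eG10 : ∀ c : Fin 3, pd c (fun y => H y 1 0) x = pd c (fun y => H y 0 1) x := by
    intro c; congr 1; funext y; exact congrFun (congrFun (hHsym y) 0) 1
  have eG20 : ∀ c : Fin 3, pd c (fun y => H y 2 0) x = pd c (fun y => H y 0 2) x := by
    intro c; congr 1; funext y; exact congrFun (congrFun (hHsym y) 0) 2
  have eG21 : ∀ c : Fin 3, pd c (fun y => H y 2 1) x = pd c (fun y => H y 1 2) x := by
    intro c; congr 1; funext y; exact congrFun (congrFun (hHsym y) 1) 2
  -- trace of H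
  have htrH : H x 0 0 + H x 1 1 + H x 2 2 = 0 := by
    have := hHtf x; simpa [Matrix.trace, Matrix.diag, Fin.sum_univ_three] using this
  -- the key analytic identity coming from differentiating [σ,H] = 3 H ω
  have dprod : ∀ (c b d k : Fin 3) (y : V3),
      DifferentiableAt ℝ (fun z => eps c b d * (σ z b k * H z k d)) y :=
    fun c b d k y => ((dσa b k y).mul (dHa k d y)).const_mul _
  have dsum1 : ∀ (c b d : Fin 3) (y : V3),
      DifferentiableAt ℝ (fun z => ∑ k, eps c b d * (σ z b k * H z k d)) y :=
    fun c b d y => DifferentiableAt.fun_sum fun k _ => dprod c b d k y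
  have dsum2 : ∀ (c b : Fin 3) (y : V3),
      DifferentiableAt ℝ (fun z => ∑ d, ∑ k, eps c b d * (σ z b k * H z k d)) y :=
    fun c b y => DifferentiableAt.fun_sum fun d _ => dsum1 c b d y
  have hL : ∀ c : Fin 3, pd c (fun y => mcross (σ y) (H y) c) x
      = ∑ b, ∑ d, ∑ k, eps c b d *
          (pd c (fun y => σ y b k) x * H x k d + σ x b k * pd c (fun y => H y k d) x) := by
    intro c
    have h1 : (fun y => mcross (σ y) (H y) c)
        = (fun y => ∑ b, ∑ d, ∑ k, eps c b d * (σ y b k * H y k d)) := by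
      funext y; simp only [mcross, Matrix.mul_apply, Finset.mul_sum]
    rw [h1, pd_sum' Finset.univ _ c x (fun b _ => dsum2 c b x)]
    refine Finset.sum_congr rfl fun b _ => ?_
    rw [pd_sum' Finset.univ _ c x (fun d _ => dsum1 c b d x)]
    refine Finset.sum_congr rfl fun d _ => ?_
    rw [pd_sum' Finset.univ _ c x (fun k _ => dprod c b d k x)]
    refine Finset.sum_congr rfl fun k _ => ?_
    rw [pd_cmul' _ _ _ _ ((dσa b k x).fun_mul (dHa k d x)), pd_mul' _ _ _ _ (dσa b k x) (dHa k d x)]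
  have hR : ∀ c : Fin 3, pd c (fun y => ((3 : ℝ) • (H y).mulVec (ω y)) c) x
      = 3 * ∑ k, (pd c (fun y => H y c k) x * ω x k + H x c k * pd c (fun y => ω y k) x) := by
    intro c
    have h1 : (fun y => ((3 : ℝ) • (H y).mulVec (ω y)) c)
        = (fun y => 3 * ∑ k, H y c k * ω y k) := by
      funext y
      simp [Matrix.mulVec, dotProduct]
    rw [h1, pd_cmul' _ _ _ _ (DifferentiableAt.fun_sum fun k _ => (dHa c k x).fun_mul (dωa k x)),
      pd_sum' Finset.univ _ c x (fun k _ => (dHa c k x).fun_mul (dωa k x))]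
    refine congrArg (fun t => 3 * t) (Finset.sum_congr rfl fun k _ => ?_)
    rw [pd_mul' _ _ _ _ (dHa c k x) (dωa k x)]
  -- scalar forms of the constraints at x
  have hb0 := congrFun (hbi1 x) 0
  have hb1 := congrFun (hbi1 x) 1
  have hb2 := congrFun (hbi1 x) 2
  simp only [mcross, Matrix.mul_apply, Matrix.mulVec, dotProduct, Pi.smul_apply,
    smul_eq_mul, Fin.sum_univ_three] at hb0 hb1 hb2
  have hdiv0 := congrFun (hbi2 x) 0
  have hdiv1 := congrFun (hbi2 x) 1
  have hdiv2 := congrFun (hbi2 x) 2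
  simp only [divM, Fin.sum_univ_three, Pi.zero_apply] at hdiv0 hdiv1 hdiv2
  -- evaluate eps everywhere
  simp only [epsv000, epsv001, epsv002, epsv010, epsv011, epsv012, epsv020, epsv021, epsv022, epsv100, epsv101, epsv102, epsv110, epsv111, epsv112, epsv120, epsv121, epsv122, epsv200, epsv201, epsv202, epsv210, epsv211, epsv212, epsv220, epsv221, epsv222] at hb0 hb1 hb2
  norm_num at hb0 hb1 hb2
  -- canonicalize symmetric entries
  simp only [eH10, eH20, eH21, eS10, eS20, eS21, eG10, eG20, eG21]
    at hb0 hb1 hb2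
  simp only [eH10, eH20, eH21, eG10, eG20, eG21] at hdiv0 hdiv1 hdiv2
  -- split I1 into its two parts
  have I1s : (∑ c : Fin 3, ∑ b, ∑ d, ∑ k, eps c b d * (pd c (fun y => σ y b k) x * H x k d))
      + (∑ c : Fin 3, ∑ b, ∑ d, ∑ k, eps c b d * (σ x b k * pd c (fun y => H y k d) x))
      = ∑ c : Fin 3, 3 * ∑ k,
          (pd c (fun y => H y c k) x * ω x k + H x c k * pd c (fun y => ω y k) x) := by
    have I1' : ∑ c : Fin 3, (∑ b, ∑ d, ∑ k, eps c b d *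
          (pd c (fun y => σ y b k) x * H x k d + σ x b k * pd c (fun y => H y k d) x))
      = ∑ c : Fin 3, 3 * ∑ k,
          (pd c (fun y => H y c k) x * ω x k + H x c k * pd c (fun y => ω y k) x) := by
      calc ∑ c : Fin 3, (∑ b, ∑ d, ∑ k, eps c b d *
            (pd c (fun y => σ y b k) x * H x k d + σ x b k * pd c (fun y => H y k d) x))
          = ∑ c : Fin 3, pd c (fun y => mcross (σ y) (H y) c) x :=
            Finset.sum_congr rfl fun c _ => (hL c).symm
        _ = ∑ c : Fin 3, pd c (fun y => ((3 : ℝ) • (H y).mulVec (ω y)) c) x := by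
            refine Finset.sum_congr rfl fun c _ => ?_
            congr 1
            funext y
            rw [hbi1 y]
        _ = _ := Finset.sum_congr rfl fun c _ => hR c
    rw [← I1']
    rw [← Finset.sum_add_distrib]
    refine Finset.sum_congr rfl fun c _ => ?_
    rw [← Finset.sum_add_distrib]
    refine Finset.sum_congr rfl fun b _ => ?_
    rw [← Finset.sum_add_distrib]
    refine Finset.sum_congr rfl fun d _ => ?_
    rw [← Finset.sum_add_distrib]
    refine Finset.sum_congr rfl fun k _ => ?_
    ring
  have A1 : frob (H x) (curlM σ x)
      = ∑ c : Fin 3, ∑ b, ∑ d, ∑ k, eps c b d * (pd c (fun y => σ y b k) x * H x k d) := by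
    simp only [frob, curlM, Fin.sum_univ_three]
    simp only [epsv000, epsv001, epsv002, epsv010, epsv011, epsv012, epsv020, epsv021, epsv022, epsv100, epsv101, epsv102, epsv110, epsv111, epsv112, epsv120, epsv121, epsv122, epsv200, epsv201, epsv202, epsv210, epsv211, epsv212, epsv220, epsv221, epsv222]
    norm_num
    simp only [eH10, eH20, eH21]
    ring
  have A2 : (∑ c : Fin 3, ∑ b, ∑ d, ∑ k, eps c b d * (σ x b k * pd c (fun y => H y k d) x))
      = - frob (σ x) (curlM H x) := by
    simp only [frob, curlM, Fin.sum_univ_three]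
    simp only [epsv000, epsv001, epsv002, epsv010, epsv011, epsv012, epsv020, epsv021, epsv022, epsv100, epsv101, epsv102, epsv110, epsv111, epsv112, epsv120, epsv121, epsv122, epsv200, epsv201, epsv202, epsv210, epsv211, epsv212, epsv220, epsv221, epsv222]
    norm_num
    simp only [eS10, eS20, eS21, eG10, eG20, eG21]
    ring
  have A3 : frob (σ x) (curlM H x) = frob (σ x) (-(2 : ℝ) • vwedge (a x) (H x)) := by
    rw [hbi3 x]
  have A4 : frob (σ x) (-(2 : ℝ) • vwedge (a x) (H x))
      = 6 * ∑ c : Fin 3, a x c * ∑ k, H x c k * ω x k := by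
    simp only [frob, vwedge, Matrix.smul_apply, smul_eq_mul, Fin.sum_univ_three]
    simp only [epsv000, epsv001, epsv002, epsv010, epsv011, epsv012, epsv020, epsv021, epsv022, epsv100, epsv101, epsv102, epsv110, epsv111, epsv112, epsv120, epsv121, epsv122, epsv200, epsv201, epsv202, epsv210, epsv211, epsv212, epsv220, epsv221, epsv222]
    norm_num
    simp only [eH10, eH20, eH21, eS10, eS20, eS21]
    linear_combination 2 * a x 0 * hb0 + 2 * a x 1 * hb1 + 2 * a x 2 * hb2
  have A5 : (∑ c : Fin 3, 3 * ∑ k,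
        (pd c (fun y => H y c k) x * ω x k + H x c k * pd c (fun y => ω y k) x))
      = 3 * frob (H x) (jac ω x) := by
    simp only [frob, jac, Fin.sum_univ_three]
    simp only [eH10, eH20, eH21, eG10, eG20, eG21]
    linear_combination 3 * ω x 0 * hdiv0 + 3 * ω x 1 * hdiv1 + 3 * ω x 2 * hdiv2
  have A6 : frob (H x) (jac ω x + (2 : ℝ) • tens (a x) (ω x))
      = frob (H x) (jac ω x) + 2 * ∑ c : Fin 3, a x c * ∑ k, H x c k * ω x k := by
    simp only [frob, jac, tens, Matrix.add_apply, Matrix.smul_apply, smul_eq_mul,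
      Fin.sum_univ_three]
    simp only [eH10, eH20, eH21]
    ring
  have claim1 : frob (H x) (curlM σ x)
      = 3 * frob (H x) (jac ω x + (2 : ℝ) • tens (a x) (ω x)) := by
    linarith [I1s, A1, A2, A3, A4, A5, A6]
  have claim2 : frob (H x) (H x)
      = frob (H x) (curlM σ x) + frob (H x) (jac ω x + (2 : ℝ) • tens (a x) (ω x)) := by
    have hRic := congrArg (fun M => frob (H x) M) (hRicci x)
    simp only [frob, hat, jac, tens, Matrix.add_apply, Matrix.sub_apply, Matrix.smul_apply,
      smul_eq_mul, Matrix.transpose_apply, Matrix.one_apply, Matrix.trace, Matrix.diag,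
      Fin.sum_univ_three, Fin.ext_iff] at hRic ⊢
    norm_num at hRic ⊢
    simp only [eH10, eH20, eH21] at hRic ⊢
    linear_combination hRic + (-(1/3) * (pd 0 (fun y => ω y 0) x + pd 1 (fun y => ω y 1) x
        + pd 2 (fun y => ω y 2) x)
      - (2/3) * (a x 0 * ω x 0 + a x 1 * ω x 1 + a x 2 * ω x 2)) * htrH
  -- positivity of |H|²
  have hex : ∃ i j, H x i j ≠ 0 := by
    by_contra hcon
    push_neg at hcon
    exact hx (by ext i j; simpa using hcon i j)
  obtain ⟨i, j, hij⟩ := hex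
  have hpos : 0 < frob (H x) (H x) := by
    have h2 : 0 < H x i j * H x i j := mul_self_pos.mpr hij
    calc (0:ℝ) < H x i j * H x i j := h2
      _ ≤ ∑ q, H x i q * H x i q :=
          Finset.single_le_sum (f := fun q => H x i q * H x i q)
            (fun q _ => mul_self_nonneg _) (Finset.mem_univ j)
      _ ≤ ∑ p, ∑ q, H x p q * H x p q :=
          Finset.single_le_sum (f := fun p => ∑ q, H x p q * H x p q)
            (fun p _ => Finset.sum_nonneg fun q _ => mul_self_nonneg _) (Finset.mem_univ i)
      _ = frob (H x) (H x) := rfl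
  constructor <;> linarith
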